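/- Let a(n) = S(n)/2ⁿ, where S(n) = ∑_{k=0}^n C(−1/3, k)·C(−2/3, n−k)·C(−1/6, k)·C(−5/6, n−k). Then for every natural number n, 144(n+2)³·a(n+2) − 4(2n+3)(18n²+54n+47)·a(n+1) + (n+1)(6n+5)(6n+7)·a(n) = 0. -/

import Mathlib

/-- Generalized binomial coefficient `C(x, k) = x(x-1)⋯(x-k+1)/k!`. -/
noncomputable def genBinom (x : ℝ) (k : ℕ) : ℝ :=
  (∏ i ∈ Finset.range k, (x - i)) / (Nat.factorial k)

/-- `S n = ∑_{k=0}^n C(-1/3,k) C(-2/3,n-k) C(-1/6,k) C(-5/6,n-k)`. -/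
noncomputable def S (n : ℕ) : ℝ :=
  ∑ k ∈ Finset.range (n + 1),
    genBinom (-1/3) k * genBinom (-2/3) (n - k) *
      genBinom (-1/6) k * genBinom (-5/6) (n - k)

noncomputable def a (n : ℕ) : ℝ := S n / 2 ^ n

noncomputable def uu : ℕ → ℝ
  | 0 => 1
  | k + 1 => uu k * (((k : ℝ) + 1/3) * ((k : ℝ) + 1/6)) / (((k : ℝ) + 1) ^ 2)

noncomputable def vv : ℕ → ℝ
  | 0 => 1
  | k + 1 => vv k * (((k : ℝ) + 2/3) * ((k : ℝ) + 5/6)) / (((k : ℝ) + 1) ^ 2)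

noncomputable def ee : ℕ → ℝ
  | 0 => 1
  | k + 1 => ee k * ((k : ℝ) + 1/2) / ((k : ℝ) + 1)

noncomputable def ww : ℕ → ℝ
  | 0 => 1
  | k + 1 => ww k * (((k : ℝ) + 1/3) * ((k : ℝ) + 2/3) * ((k : ℝ) + 1/2)) / (((k : ℝ) + 1) ^ 3)

lemma uu_succ (k : ℕ) : uu (k+1) = uu k * (((k : ℝ) + 1/3) * ((k : ℝ) + 1/6)) / (((k : ℝ) + 1) ^ 2) := rfl
lemma vv_succ (k : ℕ) : vv (k+1) = vv k * (((k : ℝ) + 2/3) * ((k : ℝ) + 5/6)) / (((k : ℝ) + 1) ^ 2) := rfl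
lemma ee_succ (k : ℕ) : ee (k+1) = ee k * ((k : ℝ) + 1/2) / ((k : ℝ) + 1) := rfl
lemma ww_succ (k : ℕ) : ww (k+1) = ww k * (((k : ℝ) + 1/3) * ((k : ℝ) + 2/3) * ((k : ℝ) + 1/2)) / (((k : ℝ) + 1) ^ 3) := rfl

lemma genBinom_succ (x : ℝ) (k : ℕ) :
    genBinom x (k+1) = genBinom x k * (x - k) / ((k : ℝ) + 1) := by
  have hk : (k.factorial : ℝ) ≠ 0 := Nat.cast_ne_zero.mpr k.factorial_ne_zero
  have hk1 : ((k : ℝ) + 1) ≠ 0 := by positivity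
  simp only [genBinom, Finset.prod_range_succ, Nat.factorial_succ]
  push_cast
  field_simp

lemma uu_eq (k : ℕ) : genBinom (-1/3) k * genBinom (-1/6) k = uu k := by
  induction k with
  | zero => simp [genBinom, uu]
  | succ k ih =>
    have hk1 : ((k : ℝ) + 1) ≠ 0 := by positivity
    rw [genBinom_succ, genBinom_succ, uu_succ, ← ih]
    field_simp
    ring

lemma vv_eq (k : ℕ) : genBinom (-2/3) k * genBinom (-5/6) k = vv k := by
  induction k with
  | zero => simp [genBinom, vv]
  | succ k ih =>
    have hk1 : ((k : ℝ) + 1) ≠ 0 := by positivity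
    rw [genBinom_succ, genBinom_succ, vv_succ, ← ih]
    field_simp
    ring
noncomputable def gA (m : ℕ) : ℕ → ℝ := fun i => -36*(i:ℝ)^2 * uu i * ee (m+1-i)

lemma v_conv (m : ℕ) : vv m = ∑ j ∈ Finset.range (m+1), uu j * ee (m - j) := by
  induction m with
  | zero => simp [vv, uu, ee]
  | succ m ih =>
    have hstep : ∀ j ∈ Finset.range (m+1),
        36*((m:ℝ)+1)^2 * (uu j * ee (m+1-j)) - ((6*(m:ℝ)+4)*(6*(m:ℝ)+5)) * (uu j * ee (m-j))
        = gA m (j+1) - gA m j := by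
      intro j hj
      rw [Finset.mem_range, Nat.lt_succ_iff] at hj
      obtain ⟨d, rfl⟩ : ∃ d, m = j + d := ⟨m - j, by omega⟩
      have e1 : j + d - j = d := by omega
      have e2 : j + d + 1 - j = d + 1 := by omega
      have e3 : j + d + 1 - (j + 1) = d := by omega
      simp only [gA, e1, e2, e3, uu_succ, ee_succ]
      have h1 : ((d:ℝ)+1) ≠ 0 := by positivity
      have h2 : ((j:ℝ)+1) ≠ 0 := by positivity
      push_cast
      field_simp
      ring
    have tele : 36*((m:ℝ)+1)^2 * (∑ j ∈ Finset.range (m+1), uu j * ee (m+1-j))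
        - ((6*(m:ℝ)+4)*(6*(m:ℝ)+5)) * (∑ j ∈ Finset.range (m+1), uu j * ee (m-j))
        = gA m (m+1) - gA m 0 := by
      rw [Finset.mul_sum, Finset.mul_sum, ← Finset.sum_sub_distrib,
        Finset.sum_congr rfl hstep]
      exact Finset.sum_range_sub (gA m) (m+1)
    have hb1 : gA m (m+1) = -36*((m:ℝ)+1)^2 * uu (m+1) := by
      simp only [gA, Nat.sub_self]
      have : ee 0 = 1 := rfl
      rw [this]
      push_cast
      ring
    have hb0 : gA m 0 = 0 := by simp [gA]
    have hsplit : ∑ j ∈ Finset.range (m+2), uu j * ee (m+1-j)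
        = (∑ j ∈ Finset.range (m+1), uu j * ee (m+1-j)) + uu (m+1) * ee 0 := by
      rw [Finset.sum_range_succ, Nat.sub_self]
    have hee0 : ee 0 = 1 := rfl
    have key : 36*((m:ℝ)+1)^2 * (∑ j ∈ Finset.range (m+2), uu j * ee (m+1-j))
        = ((6*(m:ℝ)+4)*(6*(m:ℝ)+5)) * (∑ j ∈ Finset.range (m+1), uu j * ee (m-j)) := by
      rw [hsplit, hee0]
      rw [hb1, hb0] at tele
      linear_combination tele
    rw [vv_succ, ih]
    have h1 : ((m:ℝ)+1) ≠ 0 := by positivity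
    rw [show m + 1 + 1 = m + 2 from rfl]
    field_simp
    linear_combination (-1/2 : ℝ) * key
noncomputable def qB (n k : ℝ) : ℝ :=
  -36*k^2 + 348*k^3 - 864*k^4 + 432*k^5 - 360*n*k^2 + 1836*n*k^3 - 1512*n*k^4
    - 972*n^2*k^2 + 1728*n^2*k^3 - 648*n^3*k^2

noncomputable def gB (m : ℕ) : ℕ → ℝ := fun i =>
  18 * qB (m:ℝ) (i:ℝ) * uu i * uu (m+1-i) / ((3*((m:ℝ)-(i:ℝ))+1)*(6*((m:ℝ)-(i:ℝ))+1))

lemma ne32 (d : ℕ) : 3*(d:ℝ) - 2 ≠ 0 := by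
  rcases d with _ | d
  · norm_num
  · have h : 3*(((d:ℕ)+1:ℕ):ℝ) - 2 = 3*(d:ℝ) + 1 := by push_cast; ring
    rw [h]; positivity

lemma ne65 (d : ℕ) : 6*(d:ℝ) - 5 ≠ 0 := by
  rcases d with _ | d
  · norm_num
  · have h : 6*(((d:ℕ)+1:ℕ):ℝ) - 5 = 6*(d:ℝ) + 1 := by push_cast; ring
    rw [h]; positivity

lemma w_conv (m : ℕ) : ww m = ∑ j ∈ Finset.range (m+1), uu j * uu (m - j) := by
  induction m with
  | zero => simp [ww, uu]
  | succ m ih =>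
    have hstep : ∀ j ∈ Finset.range (m+1),
        216*((m:ℝ)+1)^3 * (uu j * uu (m+1-j))
          - ((6*(m:ℝ)+2)*(6*(m:ℝ)+3)*(6*(m:ℝ)+4)) * (uu j * uu (m-j))
        = gB m (j+1) - gB m j := by
      intro j hj
      rw [Finset.mem_range, Nat.lt_succ_iff] at hj
      obtain ⟨d, rfl⟩ : ∃ d, m = j + d := ⟨m - j, by omega⟩
      have e1 : j + d - j = d := by omega
      have e2 : j + d + 1 - j = d + 1 := by omega
      have e3 : j + d + 1 - (j + 1) = d := by omega
      have h1 : ((d:ℝ)+1) ≠ 0 := by positivity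
      have h2 : ((j:ℝ)+1) ≠ 0 := by positivity
      have h3 : (3*(d:ℝ)+1) ≠ 0 := by positivity
      have h4 : (6*(d:ℝ)+1) ≠ 0 := by positivity
      have h5 := ne32 d
      have h6 := ne65 d
      have hga : gB (j+d) (j+1)
          = 18 * qB ((j:ℝ)+(d:ℝ)) ((j:ℝ)+1) * uu (j+1) * uu d
              / ((3*(d:ℝ)-2)*(6*(d:ℝ)-5)) := by
        simp only [gB, e3]
        push_cast
        ring
      have hgb : gB (j+d) j
          = 18 * qB ((j:ℝ)+(d:ℝ)) ((j:ℝ)) * uu j * uu (d+1)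
              / ((3*(d:ℝ)+1)*(6*(d:ℝ)+1)) := by
        simp only [gB, e2]
        push_cast
        ring
      rw [e1, e2, hga, hgb, uu_succ j, uu_succ d]
      simp only [qB]
      push_cast
      have h7 : (d:ℝ)*3 - 2 ≠ 0 := by rw [mul_comm]; exact h5
      have h8 : (d:ℝ)*6 - 5 ≠ 0 := by rw [mul_comm]; exact h6
      field_simp
      ring
    have tele : 216*((m:ℝ)+1)^3 * (∑ j ∈ Finset.range (m+1), uu j * uu (m+1-j))
        - ((6*(m:ℝ)+2)*(6*(m:ℝ)+3)*(6*(m:ℝ)+4)) * (∑ j ∈ Finset.range (m+1), uu j * uu (m-j))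
        = gB m (m+1) - gB m 0 := by
      rw [Finset.mul_sum, Finset.mul_sum, ← Finset.sum_sub_distrib,
        Finset.sum_congr rfl hstep]
      exact Finset.sum_range_sub (gB m) (m+1)
    have hb1 : gB m (m+1) = -216*((m:ℝ)+1)^3 * uu (m+1) := by
      simp only [gB, Nat.sub_self]
      rw [show uu 0 = 1 from rfl]
      simp only [qB]
      push_cast
      ring
    have hb0 : gB m 0 = 0 := by
      simp only [gB, qB]
      norm_num
    have hsplit : ∑ j ∈ Finset.range (m+2), uu j * uu (m+1-j)
        = (∑ j ∈ Finset.range (m+1), uu j * uu (m+1-j)) + uu (m+1) * uu 0 := by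
      rw [Finset.sum_range_succ, Nat.sub_self]
    have key : 216*((m:ℝ)+1)^3 * (∑ j ∈ Finset.range (m+2), uu j * uu (m+1-j))
        = ((6*(m:ℝ)+2)*(6*(m:ℝ)+3)*(6*(m:ℝ)+4)) * (∑ j ∈ Finset.range (m+1), uu j * uu (m-j)) := by
      rw [hsplit, show uu 0 = 1 from rfl]
      rw [hb1, hb0] at tele
      linear_combination tele
    rw [ww_succ, ih]
    have h1 : ((m:ℝ)+1) ≠ 0 := by positivity
    rw [show m + 1 + 1 = m + 2 from rfl]
    field_simp
    linear_combination (-1/12 : ℝ) * key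
noncomputable def TTC (n : ℕ) : ℝ := ∑ j ∈ Finset.range (n+1), ww j * ee (n - j)

noncomputable def gC (n : ℕ) : ℕ → ℝ := fun i =>
  144*(i:ℝ)^3 * ww i * ee (n+2-i) / (2*((n:ℝ)-(i:ℝ))+3)

lemma TTC_rec (n : ℕ) :
    144*((n:ℝ)+2)^3 * TTC (n+2)
      - 8*(2*(n:ℝ)+3)*(18*(n:ℝ)^2+54*(n:ℝ)+47) * TTC (n+1)
      + 4*((n:ℝ)+1)*(6*(n:ℝ)+5)*(6*(n:ℝ)+7) * TTC n = 0 := by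
  have hstep : ∀ j ∈ Finset.range (n+1),
      144*((n:ℝ)+2)^3 * (ww j * ee (n+2-j))
        - 8*(2*(n:ℝ)+3)*(18*(n:ℝ)^2+54*(n:ℝ)+47) * (ww j * ee (n+1-j))
        + 4*((n:ℝ)+1)*(6*(n:ℝ)+5)*(6*(n:ℝ)+7) * (ww j * ee (n-j))
      = gC n (j+1) - gC n j := by
    intro j hj
    rw [Finset.mem_range, Nat.lt_succ_iff] at hj
    obtain ⟨d, rfl⟩ : ∃ d, n = j + d := ⟨n - j, by omega⟩
    have e0 : j + d - j = d := by omega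
    have e1 : j + d + 1 - j = d + 1 := by omega
    have e2 : j + d + 2 - j = d + 2 := by omega
    have e3 : j + d + 2 - (j + 1) = d + 1 := by omega
    have hga : gC (j+d) (j+1) = 144*((j:ℝ)+1)^3 * ww (j+1) * ee (d+1) / (2*(d:ℝ)+1) := by
      simp only [gC, e3]
      push_cast
      ring
    have hgb : gC (j+d) j = 144*(j:ℝ)^3 * ww j * ee (d+2) / (2*(d:ℝ)+3) := by
      simp only [gC, e2]
      push_cast
      ring
    rw [e0, e1, e2, hga, hgb, ww_succ j, show d+2 = d+1+1 from rfl, ee_succ (d+1), ee_succ d]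
    have h1 : ((d:ℝ)+1) ≠ 0 := by positivity
    have h2 : ((j:ℝ)+1) ≠ 0 := by positivity
    have h3 : (2*(d:ℝ)+1) ≠ 0 := by positivity
    have h4 : (2*(d:ℝ)+3) ≠ 0 := by positivity
    have h5 : ((d:ℝ)+1+1) ≠ 0 := by positivity
    push_cast
    field_simp
    ring
  have tele : 144*((n:ℝ)+2)^3 * (∑ j ∈ Finset.range (n+1), ww j * ee (n+2-j))
      - 8*(2*(n:ℝ)+3)*(18*(n:ℝ)^2+54*(n:ℝ)+47) * (∑ j ∈ Finset.range (n+1), ww j * ee (n+1-j))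
      + 4*((n:ℝ)+1)*(6*(n:ℝ)+5)*(6*(n:ℝ)+7) * (∑ j ∈ Finset.range (n+1), ww j * ee (n-j))
      = gC n (n+1) - gC n 0 := by
    rw [Finset.mul_sum, Finset.mul_sum, Finset.mul_sum, ← Finset.sum_sub_distrib,
      ← Finset.sum_add_distrib, Finset.sum_congr rfl hstep]
    exact Finset.sum_range_sub (gC n) (n+1)
  have hb1 : gC n (n+1) = 144*((n:ℝ)+1)^3 * ww (n+1) * ee 1 := by
    have e : n+2-(n+1) = 1 := by omega
    simp only [gC, e]
    push_cast
    ring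
  have hb0 : gC n 0 = 0 := by simp [gC]
  have hee0 : ee 0 = 1 := rfl
  have hee1 : ee 1 = 1/2 := by rw [ee_succ 0, hee0]; norm_num
  have hs2 : TTC (n+2)
      = (∑ j ∈ Finset.range (n+1), ww j * ee (n+2-j)) + ww (n+1) * (1/2) + ww (n+2) := by
    simp only [TTC]
    rw [Finset.sum_range_succ, Finset.sum_range_succ,
      Nat.sub_self, show n+2-(n+1) = 1 from by omega, hee0, hee1]
    ring
  have hs1 : TTC (n+1)
      = (∑ j ∈ Finset.range (n+1), ww j * ee (n+1-j)) + ww (n+1) := by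
    simp only [TTC]
    rw [Finset.sum_range_succ, Nat.sub_self, hee0]
    ring
  have hs0 : TTC n = ∑ j ∈ Finset.range (n+1), ww j * ee (n-j) := rfl
  have hbdy : 144*((n:ℝ)+2)^3 * (ww (n+1) * (1/2) + ww (n+2))
      - 8*(2*(n:ℝ)+3)*(18*(n:ℝ)^2+54*(n:ℝ)+47) * ww (n+1)
      + 144*((n:ℝ)+1)^3 * ww (n+1) * (1/2) = 0 := by
    rw [show n+2 = n+1+1 from rfl, ww_succ (n+1)]
    have h : ((n:ℝ)+1+1) ≠ 0 := by positivity
    push_cast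
    field_simp
    ring
  rw [hb1, hb0, hee1] at tele
  linear_combination tele + (144*((n:ℝ)+2)^3) * hs2
    + (-8*(2*(n:ℝ)+3)*(18*(n:ℝ)^2+54*(n:ℝ)+47)) * hs1
    + (4*((n:ℝ)+1)*(6*(n:ℝ)+5)*(6*(n:ℝ)+7)) * hs0 + hbdy

lemma coeff_mk_mul (f g : ℕ → ℝ) (m : ℕ) :
    PowerSeries.coeff m (PowerSeries.mk f * PowerSeries.mk g)
      = ∑ k ∈ Finset.range (m+1), f k * g (m-k) := by
  rw [PowerSeries.coeff_mul, Finset.Nat.sum_antidiagonal_eq_sum_range_succ_mk]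
  simp [PowerSeries.coeff_mk]

lemma mkv : (PowerSeries.mk vv : PowerSeries ℝ) = PowerSeries.mk uu * PowerSeries.mk ee := by
  ext m
  rw [PowerSeries.coeff_mk, coeff_mk_mul]
  exact v_conv m

lemma mkw : (PowerSeries.mk ww : PowerSeries ℝ) = PowerSeries.mk uu * PowerSeries.mk uu := by
  ext m
  rw [PowerSeries.coeff_mk, coeff_mk_mul]
  exact w_conv m

lemma S_eq (n : ℕ) : S n = TTC n := by
  calc S n = ∑ k ∈ Finset.range (n+1), uu k * vv (n-k) := by
        refine Finset.sum_congr rfl (fun k hk => ?_)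
        rw [← uu_eq k, ← vv_eq (n-k)]
        ring
    _ = PowerSeries.coeff n (PowerSeries.mk uu * PowerSeries.mk vv) := (coeff_mk_mul uu vv n).symm
    _ = PowerSeries.coeff n (PowerSeries.mk ww * PowerSeries.mk ee) := by
        rw [mkv, mkw, mul_assoc]
    _ = ∑ j ∈ Finset.range (n+1), ww j * ee (n-j) := coeff_mk_mul ww ee n
    _ = TTC n := rfl

theorem a_recurrence (n : ℕ) :
    144 * ((n : ℝ) + 2) ^ 3 * a (n + 2)
        - 4 * (2 * n + 3) * (18 * n ^ 2 + 54 * n + 47) * a (n + 1)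
        + (n + 1) * (6 * n + 5) * (6 * n + 7) * a n = 0 := by
  have R := TTC_rec n
  rw [← S_eq n, ← S_eq (n+1), ← S_eq (n+2)] at R
  have h2 : (2:ℝ)^n ≠ 0 := by positivity
  have e2 : ((2:ℝ))^(n+2) = 2^n * 4 := by ring
  have e1 : ((2:ℝ))^(n+1) = 2^n * 2 := by ring
  simp only [a]
  rw [e1, e2]
  field_simp
  linear_combination 2 * R
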